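/- There exists an infinite biosphere G such that IAP ∩ CA ∩ REF, the set of all subsets of G which satisfy the identical ancestor point axiom, have the common ancestor property, and have the reflection property, is NOT upward generic. (Witness: G consists of two infinite directed paths v_1, v_2, ... and w_1, w_2, ... with v_1 = w_1, together with distinct additional vertices u_2, u_3, ..., where each u_i has lone parent w_i and lone child v_{i+1}, and there are no other edges; the ascending chain S_α = {v_1, v_2, ...} ∪ {w_1, ..., w_α} for α ∈ ℕ⁺ has each S_α in IAP ∩ CA ∩ REF, but the union fails the identical ancestor point axiom.) -/
import Mathlib


/-- An infinite biosphere: a directed graph on vertex type `V` with a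
birthdate function `t`, such that parents are born before children, only
finitely many organisms are born before any given time, every vertex has
finitely many children, and the vertex set is infinite. -/
structure InfiniteBiosphere (V : Type) where
  Edge : V → V → Prop
  t : V → ℝ
  edge_t : ∀ v w : V, Edge v w → t v < t w
  finite_early : ∀ r : ℝ, {v : V | t v < r}.Finite
  finite_children : ∀ v : V, {w : V | Edge v w}.Finite
  infinite_verts : Infinite V

namespace InfiniteBiosphere

variable {V : Type}

/-- `v` is an ancestor of `w`: there is a directed path of length ≥ 1 from `v` to `w`. -/
def Ancestor (G : InfiniteBiosphere V) (v w : V) : Prop :=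
  Relation.TransGen G.Edge v w

/-- The identical ancestor point axiom: for every `v ∈ S`, either all but
finitely many members of `S` are descendants of `v`, or all but finitely many
members of `S` are non-descendants of `v`. -/
def IAP (G : InfiniteBiosphere V) (S : Set V) : Prop :=
  ∀ v ∈ S, {w ∈ S | ¬ G.Ancestor v w}.Finite ∨ {w ∈ S | G.Ancestor v w}.Finite

/-- The convexity axiom: any vertex with an ancestor in `S` and a descendant in `S` is in `S`. -/
def Convex (G : InfiniteBiosphere V) (S : Set V) : Prop :=
  ∀ v : V, (∃ a ∈ S, G.Ancestor a v) → (∃ d ∈ S, G.Ancestor v d) → v ∈ S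

/-- `v` is a generator of `S`: `v ∈ S` and `S` contains at most finitely many
non-descendants of `v`. -/
def IsGenerator (G : InfiniteBiosphere V) (S : Set V) (v : V) : Prop :=
  v ∈ S ∧ {w ∈ S | ¬ G.Ancestor v w}.Finite

/-- The set of generators of `S`. -/
def gen (G : InfiniteBiosphere V) (S : Set V) : Set V :=
  {v : V | G.IsGenerator S v}

/-- `S` is connected as a subgraph of `G`, ignoring edge directions. -/
def ConnectedSet (G : InfiniteBiosphere V) (S : Set V) : Prop :=
  ∀ a ∈ S, ∀ b ∈ S,
    Relation.ReflTransGen (fun x y => (G.Edge x y ∨ G.Edge y x) ∧ x ∈ S ∧ y ∈ S) a b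

/-- A specieslike cluster: a connected set satisfying the identical ancestor
point axiom and the convexity axiom. -/
def SpecieslikeCluster (G : InfiniteBiosphere V) (S : Set V) : Prop :=
  G.ConnectedSet S ∧ G.IAP S ∧ G.Convex S

/-- The common ancestor property: some `v ∈ S` is an ancestor of every other member of `S`. -/
def CommonAncestorProp (G : InfiniteBiosphere V) (S : Set V) : Prop :=
  ∃ v ∈ S, ∀ w ∈ S, w ≠ v → G.Ancestor v w

/-- The reflection property: every member of `S` with infinitely many
descendants in `G` has infinitely many descendants in `S`. -/
def ReflectionProp (G : InfiniteBiosphere V) (S : Set V) : Prop :=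
  ∀ v ∈ S, {w : V | G.Ancestor v w}.Infinite → {w ∈ S | G.Ancestor v w}.Infinite

end InfiniteBiosphere

/-- `T` is upward generic: the union of any ascending chain of nonempty sets
from `T`, indexed by a nonempty linear order, is in `T`. -/
def UpwardGeneric {V : Type} (T : Set (Set V)) : Prop :=
  ∀ (X : Type) [LinearOrder X] [Nonempty X] (C : X → Set V),
    (∀ a b : X, a < b → C a ⊆ C b) →
    (∀ a : X, (C a).Nonempty) →
    (∀ a : X, C a ∈ T) →
    (⋃ a : X, C a) ∈ T

/-- `T` is downward generic: the intersection of any descending chain of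
nonempty sets from `T`, indexed by a nonempty linear order, is in `T`. -/
def DownwardGeneric {V : Type} (T : Set (Set V)) : Prop :=
  ∀ (X : Type) [LinearOrder X] [Nonempty X] (C : X → Set V),
    (∀ a b : X, a < b → C b ⊆ C a) →
    (∀ a : X, (C a).Nonempty) →
    (∀ a : X, C a ∈ T) →
    (⋂ a : X, C a) ∈ T


namespace BioWitness

inductive BVtx : Type
  | v : ℕ → BVtx
  | w : ℕ → BVtx
  | u : ℕ → BVtx
deriving DecidableEq

inductive BEdge : BVtx → BVtx → Prop
  | vv (n : ℕ) : BEdge (.v n) (.v (n+1))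
  | vw : BEdge (.v 0) (.w 0)
  | ww (n : ℕ) : BEdge (.w n) (.w (n+1))
  | wu (n : ℕ) : BEdge (.w n) (.u n)
  | uv (n : ℕ) : BEdge (.u n) (.v (n+1))

def bidx : BVtx → ℕ
  | .v n => 3*n
  | .w n => 3*n+1
  | .u n => 3*n+2

lemma bidx_inj : Function.Injective bidx := by
  intro a b h
  cases a <;> cases b <;> simp only [bidx] at h <;>
    first
    | exact congrArg _ (by omega)
    | omega

def bG : InfiniteBiosphere BVtx where
  Edge := BEdge
  t := fun x => (bidx x : ℝ)
  edge_t := by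
    intro a b h
    have : bidx a < bidx b := by cases h <;> simp only [bidx] <;> omega
    show (bidx a : ℝ) < bidx b
    exact_mod_cast this
  finite_early := by
    intro r
    have h1 : {k : ℕ | (k : ℝ) < r}.Finite := by
      apply Set.Finite.subset (Set.finite_Iio (⌈r⌉₊))
      intro k hk
      exact Nat.lt_ceil.mpr hk
    have : {x : BVtx | (bidx x : ℝ) < r} = bidx ⁻¹' {k : ℕ | (k : ℝ) < r} := rfl
    rw [this]
    exact Set.Finite.preimage bidx_inj.injOn h1
  finite_children := by
    intro x
    rcases x with n | n | n
    · apply Set.Finite.subset ((Set.finite_singleton (BVtx.w 0)).insert (BVtx.v (n+1)))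
      rintro y h
      cases h
      · exact Set.mem_insert _ _
      · exact Set.mem_insert_of_mem _ rfl
    · apply Set.Finite.subset ((Set.finite_singleton (BVtx.u n)).insert (BVtx.w (n+1)))
      rintro y h
      cases h
      · exact Set.mem_insert _ _
      · exact Set.mem_insert_of_mem _ rfl
    · apply Set.Finite.subset (Set.finite_singleton (BVtx.v (n+1)))
      rintro y h
      cases h
      exact rfl
  infinite_verts := Infinite.of_injective BVtx.v (fun a b h => by injection h)

lemma tg_vv {n m : ℕ} (h : n < m) : Relation.TransGen BEdge (.v n) (.v m) := by
  induction m with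
  | zero => omega
  | succ m ih =>
    rcases Nat.lt_succ_iff_lt_or_eq.mp h with h' | h'
    · exact (ih h').tail (BEdge.vv m)
    · subst h'; exact Relation.TransGen.single (BEdge.vv n)

lemma tg_ww {n m : ℕ} (h : n < m) : Relation.TransGen BEdge (.w n) (.w m) := by
  induction m with
  | zero => omega
  | succ m ih =>
    rcases Nat.lt_succ_iff_lt_or_eq.mp h with h' | h'
    · exact (ih h').tail (BEdge.ww m)
    · subst h'; exact Relation.TransGen.single (BEdge.ww n)

lemma tg_wv {n m : ℕ} (h : n < m) : Relation.TransGen BEdge (.w n) (.v m) := by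
  have h1 : Relation.TransGen BEdge (.w n) (.v (n+1)) :=
    (Relation.TransGen.single (BEdge.wu n)).tail (BEdge.uv n)
  rcases Nat.lt_or_ge (n+1) m with h' | h'
  · exact h1.trans (tg_vv h')
  · have : m = n + 1 := by omega
    subst this; exact h1

lemma tg_v0w (m : ℕ) : Relation.TransGen BEdge (.v 0) (.w m) := by
  have h1 : Relation.TransGen BEdge (.v 0) (.w 0) := Relation.TransGen.single BEdge.vw
  rcases Nat.eq_zero_or_pos m with h | h
  · subst h; exact h1
  · exact h1.trans (tg_ww h)

lemma anc_from_v1 {y : BVtx} (h : Relation.TransGen BEdge (.v 1) y) :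
    ∃ m, 2 ≤ m ∧ y = BVtx.v m := by
  induction h with
  | single e => cases e; exact ⟨2, by omega, rfl⟩
  | tail _ e ih =>
    obtain ⟨m, hm, rfl⟩ := ih
    cases e
    · exact ⟨m + 1, by omega, rfl⟩
    · omega

def Cset (a : ℕ) : Set BVtx :=
  {x | (∃ n, x = .v n) ∨ (∃ n, n ≤ a ∧ x = .w n)}

lemma v_mem_Cset (a n : ℕ) : BVtx.v n ∈ Cset a := Or.inl ⟨n, rfl⟩

lemma Cset_mem :
    ∀ a : ℕ, Cset a ∈ {S : Set BVtx |
      bG.IAP S ∧ bG.CommonAncestorProp S ∧ bG.ReflectionProp S} := by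
  intro a
  refine ⟨?_, ?_, ?_⟩
  · -- IAP
    intro x hx
    left
    rcases hx with ⟨n, rfl⟩ | ⟨n, hn, rfl⟩
    · apply Set.Finite.subset
        (((Set.finite_Iic n).image BVtx.v).union ((Set.finite_Iic a).image BVtx.w))
      rintro y ⟨hy, hna⟩
      rcases hy with ⟨m, rfl⟩ | ⟨m, hm, rfl⟩
      · left
        rcases Nat.lt_or_ge n m with h | h
        · exact absurd (tg_vv h) hna
        · exact ⟨m, h, rfl⟩
      · right; exact ⟨m, hm, rfl⟩
    · apply Set.Finite.subset
        (((Set.finite_Iic n).image BVtx.v).union ((Set.finite_Iic n).image BVtx.w))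
      rintro y ⟨hy, hna⟩
      rcases hy with ⟨m, rfl⟩ | ⟨m, _, rfl⟩
      · left
        rcases Nat.lt_or_ge n m with h | h
        · exact absurd (tg_wv h) hna
        · exact ⟨m, h, rfl⟩
      · right
        rcases Nat.lt_or_ge n m with h | h
        · exact absurd (tg_ww h) hna
        · exact ⟨m, h, rfl⟩
  · -- common ancestor: v 0
    refine ⟨BVtx.v 0, v_mem_Cset a 0, ?_⟩
    rintro y hy hne
    rcases hy with ⟨m, rfl⟩ | ⟨m, _, rfl⟩
    · have : 0 < m := by
        rcases Nat.eq_zero_or_pos m with h | h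
        · subst h; exact absurd rfl hne
        · exact h
      exact tg_vv this
    · exact tg_v0w m
  · -- reflection
    intro x hx _
    obtain ⟨N, hN⟩ : ∃ N, ∀ m, N < m → bG.Ancestor x (.v m) := by
      rcases hx with ⟨n, rfl⟩ | ⟨n, _, rfl⟩
      · exact ⟨n, fun m hm => tg_vv hm⟩
      · exact ⟨n, fun m hm => tg_wv hm⟩
    refine Set.infinite_of_injective_forall_mem
      (f := fun k : ℕ => BVtx.v (N + 1 + k)) ?_ ?_
    · intro i j h
      simp only [BVtx.v.injEq] at h
      omega
    · intro k
      exact ⟨v_mem_Cset a _, hN _ (by omega)⟩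

end BioWitness

/-- There is an infinite biosphere in which `IAP ∩ CA ∩ REF` is not upward generic. -/
theorem exists_iap_ca_ref_not_upwardGeneric :
    ∃ (V : Type) (G : InfiniteBiosphere V),
      ¬ UpwardGeneric {S : Set V |
        G.IAP S ∧ G.CommonAncestorProp S ∧ G.ReflectionProp S} := by
  open BioWitness in
  refine ⟨BVtx, bG, ?_⟩
  intro h
  have hmono : ∀ a b : ℕ, a < b → Cset a ⊆ Cset b := by
    intro a b hab x hx
    rcases hx with ⟨n, rfl⟩ | ⟨n, hn, rfl⟩
    · exact Or.inl ⟨n, rfl⟩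
    · exact Or.inr ⟨n, by omega, rfl⟩
  have hne : ∀ a : ℕ, (Cset a).Nonempty := fun a => ⟨BVtx.v 0, v_mem_Cset a 0⟩
  have hU := h ℕ Cset hmono hne Cset_mem
  obtain ⟨hIAP, -, -⟩ := hU
  have hv1 : BVtx.v 1 ∈ ⋃ a : ℕ, Cset a :=
    Set.mem_iUnion.mpr ⟨0, v_mem_Cset 0 1⟩
  rcases hIAP (BVtx.v 1) hv1 with hfin | hfin
  · -- infinitely many non-descendants: all the w's
    refine Set.infinite_of_injective_forall_mem
      (f := fun k : ℕ => BVtx.w k) ?_ ?_ hfin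
    · intro i j hij; injection hij
    · intro k
      refine ⟨Set.mem_iUnion.mpr ⟨k, Or.inr ⟨k, le_refl k, rfl⟩⟩, ?_⟩
      intro hanc
      obtain ⟨m, _, hm⟩ := anc_from_v1 hanc
      exact absurd hm (by simp)
  · -- infinitely many descendants: the v's beyond 1
    refine Set.infinite_of_injective_forall_mem
      (f := fun k : ℕ => BVtx.v (k + 2)) ?_ ?_ hfin
    · intro i j hij
      simp only [BVtx.v.injEq] at hij
      omega
    · intro k
      exact ⟨Set.mem_iUnion.mpr ⟨0, v_mem_Cset 0 _⟩, tg_vv (by omega)⟩
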